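/- Partial functional correctness of appendA: for all pure lists xs ys and thunked approximations xsA ysA with xsA `is_approx` xs and ysA `is_approx` ys, every value-cost pair (zsA, n) in appendA xsA ysA satisfies zsA `is_approx` append xs ys. -/
import Mathlib


namespace Clair

/-- The clairvoyance monad: sets of value-cost pairs. -/
def M (a : Type) : Type := a → Nat → Prop

def ret {a : Type} (x : a) : M a := fun y n => y = x ∧ n = 0

def bind {a b : Type} (u : M a) (k : a → M b) : M b :=
  fun y n => ∃ x nx ny, u x nx ∧ k x y ny ∧ n = nx + ny

def tick : M Unit := fun _ n => n = 1

inductive T (a : Type) : Type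
  | Thunk (v : a) : T a
  | Undefined : T a

def thunk {a : Type} (u : M a) : M (T a) := fun t n =>
  match t with
  | .Thunk v => u v n
  | .Undefined => n = 0

def forcing {a b : Type} (t : T a) (k : a → M b) : M b :=
  match t with
  | .Thunk v => k v
  | .Undefined => fun _ _ => False

/-- `t >>! s` is `t >> s` in the paper: `bind t (fun _ => s)`. -/
def seqM {a b : Type} (t : M a) (s : M b) : M b := bind t (fun _ => s)

infixl:55 " >>! " => seqM

def pessimistic {a : Type} (u : M a) (r : a → Nat → Prop) : Prop :=
  ∀ x n, u x n → r x n

def optimistic {a : Type} (u : M a) (r : a → Nat → Prop) : Prop :=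
  ∃ x n, u x n ∧ r x n

inductive listA (a : Type) : Type
  | NilA : listA a
  | ConsA (x : T a) (xs : T (listA a)) : listA a

/-- Lifting a relation through the thunk type `T` (for `less_defined`). -/
inductive LDT {a : Type} (ld : a → a → Prop) : T a → T a → Prop
  | undef : ∀ t, LDT ld T.Undefined t
  | thunk : ∀ {x y}, ld x y → LDT ld (T.Thunk x) (T.Thunk y)

inductive less_defined {a : Type} : listA a → listA a → Prop
  | nil : less_defined .NilA .NilA
  | cons : ∀ {x y : T a} {xs ys : T (listA a)},
      LDT Eq x y → LDT less_defined xs ys →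
      less_defined (.ConsA x xs) (.ConsA y ys)

def exactA {a : Type} : List a → listA a
  | [] => .NilA
  | x :: xs => .ConsA (.Thunk x) (.Thunk (exactA xs))

/-- Lifting a relation through `T` on the left only (for `is_approx`). -/
inductive TA {a b : Type} (R : a → b → Prop) : T a → b → Prop
  | undef : ∀ y, TA R T.Undefined y
  | thunk : ∀ {x y}, R x y → TA R (T.Thunk x) y

inductive is_approx {a : Type} : listA a → List a → Prop
  | nil : is_approx .NilA []
  | cons : ∀ {xA : T a} {x : a} {xsA : T (listA a)} {xs : List a},
      TA Eq xA x → TA is_approx xsA xs →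
      is_approx (.ConsA xA xsA) (x :: xs)

def sizeX' {a : Type} (n0 : Nat) : listA a → Nat
  | .NilA => n0
  | .ConsA _ (.Thunk xs) => sizeX' n0 xs + 1
  | .ConsA _ .Undefined => 1

def sizeX {a : Type} (n0 : Nat) : T (listA a) → Nat
  | .Thunk xs => sizeX' n0 xs
  | .Undefined => 0

def appendA_ {a : Type} : listA a → T (listA a) → M (listA a)
  | .NilA, ysA => tick >>! forcing ysA ret
  | .ConsA x xs1, ysA =>
      tick >>! bind (thunk (match xs1 with
          | .Thunk xs1' => appendA_ xs1' ysA
          | .Undefined => fun _ _ => False))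
        (fun t => ret (.ConsA x t))

def appendA {a : Type} (xsA ysA : T (listA a)) : M (listA a) :=
  forcing xsA (fun xs => appendA_ xs ysA)

def takeA_ {a : Type} : Nat → listA a → M (listA a)
  | 0, _ => tick >>! ret .NilA
  | _ + 1, .NilA => tick >>! ret .NilA
  | n + 1, .ConsA x xs1 =>
      tick >>! bind (thunk (match xs1 with
          | .Thunk xs1' => takeA_ n xs1'
          | .Undefined => fun _ _ => False))
        (fun t => ret (.ConsA x t))

def takeA {a : Type} (n : Nat) (xsA : T (listA a)) : M (listA a) :=
  forcing xsA (fun xs => takeA_ n xs)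

/-- Cost-free monadic reversal (the `rev` whose cost is axiomatized to 0). -/
def revA_ {a : Type} : listA a → T (listA a) → M (listA a)
  | .NilA, acc => forcing acc ret
  | .ConsA x xs1, acc =>
      match xs1 with
      | .Thunk xs1' => revA_ xs1' (.Thunk (.ConsA x acc))
      | .Undefined => fun _ _ => False

def revA {a : Type} (xsA : T (listA a)) : M (listA a) :=
  forcing xsA (fun xs => revA_ xs (.Thunk .NilA))

/-- Tail-recursive `take'` translated to the clairvoyance monad,
    with one tick per call and a zero-cost `rev`. -/
def take'A_ {a : Type} : T (listA a) → Nat → listA a → M (listA a)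
  | ysA, 0, _ => tick >>! revA ysA
  | ysA, _ + 1, .NilA => tick >>! revA ysA
  | ysA, n + 1, .ConsA x xs1 =>
      tick >>! (match xs1 with
        | .Thunk xs1' => take'A_ (.Thunk (.ConsA x ysA)) n xs1'
        | .Undefined => fun _ _ => False)

end Clair

namespace Clair

theorem appendA__correct_partial {a : Type} (xsA' : listA a) :
    ∀ (xs ys : List a) (ysA : T (listA a)),
    is_approx xsA' xs → TA is_approx ysA ys →
    pessimistic (appendA_ xsA' ysA) (fun zsA _ => is_approx zsA (xs ++ ys)) := by
  cases xsA' with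
  | NilA =>
    intro xs ys ysA Hxs Hys z n h
    cases Hxs
    obtain ⟨_, _, _, _, hf, _⟩ := h
    cases ysA with
    | Undefined => exact hf.elim
    | Thunk v =>
      obtain ⟨hz, -⟩ := hf
      subst hz
      cases Hys with
      | thunk h' => simpa using h'
  | ConsA x xs1 =>
    intro xs ys ysA Hxs Hys z n h
    cases Hxs with
    | cons hx hxs =>
      rw [appendA_.eq_def] at h
      simp only [] at h
      have h2 : (tick >>! Clair.bind (thunk (match xs1 with
          | .Thunk xs1' => appendA_ xs1' ysA
          | .Undefined => fun _ _ => False))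
        (fun t => ret (.ConsA x t))) z n := h
      clear h
      obtain ⟨_, _, _, _, ⟨t, nt, _, ht, ⟨hz, -⟩, -⟩, -⟩ := h2
      subst hz
      refine is_approx.cons hx ?_
      cases t with
      | Undefined => exact TA.undef _
      | Thunk v =>
        cases xs1 with
        | Undefined => exact ht.elim
        | Thunk xs1' =>
          cases hxs with
          | thunk h' =>
            have := appendA__correct_partial xs1' _ _ _ h' Hys v nt ht
            exact TA.thunk (by simpa using this)
end Clair

open Clair in
/-- Partial functional correctness of `appendA`: every execution yields an
approximation of the pure `append xs ys`. -/
theorem appendA_correct_partial {a : Type} (xs ys : List a)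
    (xsA ysA : T (listA a))
    (Hxs : TA is_approx xsA xs) (Hys : TA is_approx ysA ys) :
    pessimistic (appendA xsA ysA) (fun zsA _ => is_approx zsA (xs ++ ys)) := by
  intro z n h
  cases xsA with
  | Undefined => exact h.elim
  | Thunk xs' =>
    cases Hxs with
    | thunk h' => exact appendA__correct_partial xs' xs ys ysA h' Hys z n h
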